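/- arXiv:2403.14915 — 10 statements merged into one kernel-verified Lean document; each statement's English description precedes it below -/
import Mathlib

section
/- Weak duality for the Schrödinger bridge problem with directional sign templates: for every feasible matrix P and every pair of vectors μ, ν ∈ ℝⁿ, J(P) ≥ h(μ, ν). -/
/-- The entropic objective `J(P) = ∑_{i,j} P_{ij}(log(P_{ij}/Q_{ij}) − 1)`,
with the convention that a term with `P_{ij} = 0` contributes `0`. -/
noncomputable def entObj {n : ℕ} (Q P : Matrix (Fin n) (Fin n) ℝ) : ℝ :=
  ∑ i, ∑ j, if P i j = 0 then (0 : ℝ) else P i j * (Real.log (P i j / Q i j) - 1)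

/-- Feasibility of a posterior matrix `P` with respect to the prior `Q`, the
directional sign templates `X`, `Y`, and the marginals `p`, `q`. -/
def Feasible {n : ℕ} (Q X Y : Matrix (Fin n) (Fin n) ℝ) (p q : Fin n → ℝ)
    (P : Matrix (Fin n) (Fin n) ℝ) : Prop :=
  (∀ i j, 0 ≤ P i j) ∧ (∀ i j, Q i j = 0 → P i j = 0) ∧
  (∀ j, ∑ i, X i j * P i j = p j) ∧ (∀ i, ∑ j, Y i j * P i j = q i)

/-- The dual function
`h(μ, ν) = −∑_{i,j} Q_{ij} exp(−μ_j X_{ij} − ν_i Y_{ij}) − ∑_j μ_j p_j − ∑_i ν_i q_i`. -/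
noncomputable def dualFun {n : ℕ} (Q X Y : Matrix (Fin n) (Fin n) ℝ) (p q : Fin n → ℝ)
    (μ ν : Fin n → ℝ) : ℝ :=
  -(∑ i, ∑ j, Q i j * Real.exp (-(μ j) * X i j - (ν i) * Y i j))
    - (∑ j, μ j * p j) - (∑ i, ν i * q i)

/-- Pointwise key inequality. -/
lemma pointwise_key (Pq Qq a : ℝ) (hP : 0 ≤ Pq) (hQ : 0 ≤ Qq) (hQ0 : Qq = 0 → Pq = 0) :
    0 ≤ (if Pq = 0 then (0 : ℝ) else Pq * (Real.log (Pq / Qq) - 1))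
        + Qq * Real.exp a - a * Pq := by
  by_cases h : Pq = 0
  · simp [h]
    positivity
  · have hPpos : 0 < Pq := lt_of_le_of_ne hP (Ne.symm h)
    have hQpos : 0 < Qq := by
      rcases lt_or_eq_of_le hQ with h' | h'
      · exact h'
      · exact absurd (hQ0 h'.symm) h
    simp only [h, if_false]
    have hx : 0 < Qq * Real.exp a / Pq := by positivity
    have hlog := Real.log_le_sub_one_of_pos hx
    have hlx : Real.log (Qq * Real.exp a / Pq) = Real.log Qq + a - Real.log Pq := by
      rw [Real.log_div (by positivity) (ne_of_gt hPpos), Real.log_mul (ne_of_gt hQpos)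
        (ne_of_gt (Real.exp_pos a)), Real.log_exp]
    have hld : Real.log (Pq / Qq) = Real.log Pq - Real.log Qq :=
      Real.log_div (ne_of_gt hPpos) (ne_of_gt hQpos)
    rw [hlx] at hlog
    have hmul : (Real.log Qq + a - Real.log Pq) * Pq ≤ Qq * Real.exp a - Pq := by
      have := mul_le_mul_of_nonneg_right hlog (le_of_lt hPpos)
      calc (Real.log Qq + a - Real.log Pq) * Pq ≤ (Qq * Real.exp a / Pq - 1) * Pq := this
        _ = Qq * Real.exp a - Pq := by field_simp
    rw [hld]
    nlinarith [hmul]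

/-- Weak duality for the Schrödinger bridge problem with directional
sign templates: for every feasible matrix `P` and every pair of vectors
`μ, ν ∈ ℝⁿ`, `J(P) ≥ h(μ, ν)`. -/
theorem weak_duality {n : ℕ} (hn : 1 ≤ n) (Q X Y : Matrix (Fin n) (Fin n) ℝ)
    (hQ : ∀ i j, 0 ≤ Q i j)
    (hX : ∀ i j, X i j = -1 ∨ X i j = 0 ∨ X i j = 1)
    (hY : ∀ i j, Y i j = -1 ∨ Y i j = 0 ∨ Y i j = 1)
    (p q : Fin n → ℝ) (P : Matrix (Fin n) (Fin n) ℝ)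
    (hP : Feasible Q X Y p q P) (μ ν : Fin n → ℝ) :
    entObj Q P ≥ dualFun Q X Y p q μ ν := by
  obtain ⟨hPnn, hPQ, hXc, hYc⟩ := hP
  have hpj : ∑ j, μ j * p j = ∑ i, ∑ j, μ j * (X i j * P i j) := by
    rw [Finset.sum_comm]
    exact Finset.sum_congr rfl fun j _ => by
      rw [← hXc j, Finset.mul_sum]
  have hqi : ∑ i, ν i * q i = ∑ i, ∑ j, ν i * (Y i j * P i j) := by
    exact Finset.sum_congr rfl fun i _ => by
      rw [← hYc i, Finset.mul_sum]
  have key : entObj Q P - dualFun Q X Y p q μ ν =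
      ∑ i, ∑ j, ((if P i j = 0 then (0 : ℝ) else P i j * (Real.log (P i j / Q i j) - 1))
        + Q i j * Real.exp (-(μ j) * X i j - (ν i) * Y i j)
        + (μ j * (X i j * P i j) + ν i * (Y i j * P i j))) := by
    unfold entObj dualFun
    rw [hpj, hqi]
    simp only [Finset.sum_add_distrib]
    ring
  have hsum : 0 ≤ entObj Q P - dualFun Q X Y p q μ ν := by
    rw [key]
    apply Finset.sum_nonneg; intro i _
    apply Finset.sum_nonneg; intro j _
    have h := pointwise_key (P i j) (Q i j) (-(μ j) * X i j - (ν i) * Y i j)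
      (hPnn i j) (hQ i j) (hPQ i j)
    nlinarith [h]
  linarith
end

section
/- Optimality of the closed-form posterior: let μ, ν ∈ ℝⁿ and define P by P_{ij} = Q_{ij}·exp(−μ_j X_{ij} − ν_i Y_{ij}) for all i,j. If P is feasible (i.e., ∑_{i=1}^n X_{ij} P_{ij} = p_j for all j and ∑_{j=1}^n Y_{ij} P_{ij} = q_i for all i), then for every feasible matrix P′ one has J(P) ≤ J(P′); that is, P minimizes J over the feasible set. -/
/-- Gibbs-type inequality: `x - a ≤ x log(x/a)` for positive `a, x`. -/
lemma log_ineq_aux {a x : ℝ} (ha : 0 < a) (hx : 0 < x) :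
    x - a ≤ x * Real.log (x / a) := by
  have h1 : Real.log (a / x) ≤ a / x - 1 := Real.log_le_sub_one_of_pos (by positivity)
  have h2 : Real.log (a / x) = -Real.log (x / a) := by
    rw [← Real.log_inv, inv_div]
  rw [h2] at h1
  have h3 := mul_le_mul_of_nonneg_left h1 hx.le
  have h4 : x * (a / x - 1) = a - x := by field_simp
  nlinarith

/-- Optimality of the closed-form posterior
`P_{ij} = Q_{ij}·exp(−μ_j X_{ij} − ν_i Y_{ij})`: if `P` is feasible, then it
minimizes `J` over the feasible set. -/
theorem closed_form_optimality {n : ℕ} (hn : 1 ≤ n) (Q X Y : Matrix (Fin n) (Fin n) ℝ)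
    (hQ : ∀ i j, 0 ≤ Q i j)
    (hX : ∀ i j, X i j = -1 ∨ X i j = 0 ∨ X i j = 1)
    (hY : ∀ i j, Y i j = -1 ∨ Y i j = 0 ∨ Y i j = 1)
    (p q : Fin n → ℝ) (μ ν : Fin n → ℝ)
    (P : Matrix (Fin n) (Fin n) ℝ)
    (hPdef : ∀ i j, P i j = Q i j * Real.exp (-(μ j) * X i j - (ν i) * Y i j))
    (hP : Feasible Q X Y p q P) :
    ∀ P' : Matrix (Fin n) (Fin n) ℝ, Feasible Q X Y p q P' → entObj Q P ≤ entObj Q P' := by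
  obtain ⟨hPpos, hPsupp, hPcol, hProw⟩ := hP
  intro P' hP'
  obtain ⟨hP'pos, hP'supp, hP'col, hP'row⟩ := hP'
  -- termwise tangent inequality
  have key : ∀ i j,
      (if P i j = 0 then (0:ℝ) else P i j * (Real.log (P i j / Q i j) - 1))
        + (-(μ j) * X i j - ν i * Y i j) * (P' i j - P i j)
      ≤ (if P' i j = 0 then (0:ℝ) else P' i j * (Real.log (P' i j / Q i j) - 1)) := by
    intro i j
    by_cases hQ0 : Q i j = 0
    · have h1 : P i j = 0 := hPsupp i j hQ0
      have h2 : P' i j = 0 := hP'supp i j hQ0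
      simp [h1, h2]
    · have hQpos : 0 < Q i j := lt_of_le_of_ne (hQ i j) (Ne.symm hQ0)
      have hPp : 0 < P i j := by rw [hPdef]; positivity
      have hlog : Real.log (P i j / Q i j) = -(μ j) * X i j - ν i * Y i j := by
        rw [hPdef, mul_comm, mul_div_assoc, div_self hQ0, mul_one, Real.log_exp]
      rw [if_neg hPp.ne', hlog]
      by_cases hP'0 : P' i j = 0
      · rw [if_pos hP'0, hP'0]
        nlinarith [hPp]
      · have hP'p : 0 < P' i j := lt_of_le_of_ne (hP'pos i j) (Ne.symm hP'0)
        rw [if_neg hP'0]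
        have hkey := log_ineq_aux hPp hP'p
        have hsplit : Real.log (P' i j / Q i j)
            = Real.log (P' i j / P i j) + (-(μ j) * X i j - ν i * Y i j) := by
          rw [← hlog, Real.log_div hP'0 hQ0, Real.log_div hP'0 hPp.ne',
            Real.log_div hPp.ne' hQ0]
          ring
        rw [hsplit]
        nlinarith [hkey]
  -- the linear correction sums to zero
  have h1 : ∑ i, ∑ j, (-(μ j) * X i j) * (P' i j - P i j) = 0 := by
    rw [Finset.sum_comm]
    apply Finset.sum_eq_zero
    intro j _
    have : ∀ i, (-(μ j) * X i j) * (P' i j - P i j)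
        = -(μ j) * (X i j * P' i j) - -(μ j) * (X i j * P i j) := fun i => by ring
    rw [Finset.sum_congr rfl (fun i _ => this i), Finset.sum_sub_distrib,
      ← Finset.mul_sum, ← Finset.mul_sum, hP'col j, hPcol j]
    ring
  have h2 : ∑ i, ∑ j, (-(ν i) * Y i j) * (P' i j - P i j) = 0 := by
    apply Finset.sum_eq_zero
    intro i _
    have : ∀ j, (-(ν i) * Y i j) * (P' i j - P i j)
        = -(ν i) * (Y i j * P' i j) - -(ν i) * (Y i j * P i j) := fun j => by ring
    rw [Finset.sum_congr rfl (fun j _ => this j), Finset.sum_sub_distrib,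
      ← Finset.mul_sum, ← Finset.mul_sum, hP'row i, hProw i]
    ring
  have hsum : ∑ i, ∑ j, (-(μ j) * X i j - ν i * Y i j) * (P' i j - P i j) = 0 := by
    have hsplit : ∀ i j, (-(μ j) * X i j - ν i * Y i j) * (P' i j - P i j)
        = (-(μ j) * X i j) * (P' i j - P i j) + (-(ν i) * Y i j) * (P' i j - P i j) :=
      fun i j => by ring
    calc ∑ i, ∑ j, (-(μ j) * X i j - ν i * Y i j) * (P' i j - P i j)
        = ∑ i, ∑ j, ((-(μ j) * X i j) * (P' i j - P i j)
            + (-(ν i) * Y i j) * (P' i j - P i j)) := by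
          exact Finset.sum_congr rfl fun i _ => Finset.sum_congr rfl fun j _ => hsplit i j
      _ = (∑ i, ∑ j, (-(μ j) * X i j) * (P' i j - P i j))
            + ∑ i, ∑ j, (-(ν i) * Y i j) * (P' i j - P i j) := by
          rw [← Finset.sum_add_distrib]
          exact Finset.sum_congr rfl fun i _ => Finset.sum_add_distrib
      _ = 0 := by rw [h1, h2]; ring
  have hmain : entObj Q P
      + ∑ i, ∑ j, (-(μ j) * X i j - ν i * Y i j) * (P' i j - P i j) ≤ entObj Q P' := by
    unfold entObj
    rw [← Finset.sum_add_distrib]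
    apply Finset.sum_le_sum
    intro i _
    rw [← Finset.sum_add_distrib]
    exact Finset.sum_le_sum fun j _ => key i j
  linarith [hmain, hsum.ge, hsum.le]
end

section
/- Strong duality at the closed-form posterior: let μ, ν ∈ ℝⁿ and define P by P_{ij} = Q_{ij}·exp(−μ_j X_{ij} − ν_i Y_{ij}) for all i,j. If P is feasible, then J(P) = h(μ, ν). -/
/-!
At `P = Q ∘ exp θ` with `θ_{ij} = −μ_j X_{ij} − ν_i Y_{ij}` every nonzero entry has
`log (P_{ij} / Q_{ij}) = θ_{ij}`, so `J(P) = ⟨P, θ⟩ − ∑ Q ∘ exp θ`. The pairing `⟨P, θ⟩` splits along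
columns and rows, and the marginal constraints turn it into `−⟨μ, p⟩ − ⟨ν, q⟩`.
-/

open Finset Real

lemma ite_mul_log_div_sub_one_of_eq_mul_exp {x q t : ℝ} (hx : x = q * exp t) :
    (if x = 0 then 0 else x * (log (x / q) - 1)) = x * t - q * exp t := by
  subst hx
  by_cases hq : q = 0
  · simp [hq]
  · rw [if_neg (mul_ne_zero hq (exp_pos t).ne'), mul_div_cancel_left₀ _ hq, log_exp]
    ring

lemma entObj_of_eq_mul_exp {n : ℕ} {Q P θ : Matrix (Fin n) (Fin n) ℝ}
    (hP : ∀ i j, P i j = Q i j * exp (θ i j)) :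
    entObj Q P = ∑ i, ∑ j, P i j * θ i j - ∑ i, ∑ j, Q i j * exp (θ i j) := by
  simp only [entObj, ite_mul_log_div_sub_one_of_eq_mul_exp (hP _ _), sum_sub_distrib]

lemma sum_sum_mul_exponent_eq_of_marginals {ι κ : Type*} [Fintype ι] [Fintype κ]
    {X Y P : Matrix ι κ ℝ} {p μ : κ → ℝ} {q ν : ι → ℝ}
    (hcol : ∀ j, ∑ i, X i j * P i j = p j) (hrow : ∀ i, ∑ j, Y i j * P i j = q i) :
    ∑ i, ∑ j, P i j * (-(μ j) * X i j - ν i * Y i j) = -∑ j, μ j * p j - ∑ i, ν i * q i := by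
  have hsplit : ∀ i j, P i j * (-(μ j) * X i j - ν i * Y i j)
      = -(μ j * (X i j * P i j)) - ν i * (Y i j * P i j) := fun i j => by ring
  simp only [hsplit, sum_sub_distrib, sum_neg_distrib, ← mul_sum, hrow]
  rw [sum_comm]
  simp only [← mul_sum, hcol]

theorem strong_duality_general {n : ℕ} (Q X Y : Matrix (Fin n) (Fin n) ℝ)
    (p q : Fin n → ℝ) (μ ν : Fin n → ℝ)
    (P : Matrix (Fin n) (Fin n) ℝ)
    (hPdef : ∀ i j, P i j = Q i j * Real.exp (-(μ j) * X i j - (ν i) * Y i j))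
    (hP : Feasible Q X Y p q P) :
    entObj Q P = dualFun Q X Y p q μ ν := by
  obtain ⟨-, -, hcol, hrow⟩ := hP
  rw [entObj_of_eq_mul_exp hPdef, sum_sum_mul_exponent_eq_of_marginals hcol hrow, dualFun]
  ring

/-- Strong duality at the closed-form posterior
`P_{ij} = Q_{ij}·exp(−μ_j X_{ij} − ν_i Y_{ij})`: if `P` is feasible, then
`J(P) = h(μ, ν)`. -/
theorem strong_duality {n : ℕ} (hn : 1 ≤ n) (Q X Y : Matrix (Fin n) (Fin n) ℝ)
    (hQ : ∀ i j, 0 ≤ Q i j)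
    (hX : ∀ i j, X i j = -1 ∨ X i j = 0 ∨ X i j = 1)
    (hY : ∀ i j, Y i j = -1 ∨ Y i j = 0 ∨ Y i j = 1)
    (p q : Fin n → ℝ) (μ ν : Fin n → ℝ)
    (P : Matrix (Fin n) (Fin n) ℝ)
    (hPdef : ∀ i j, P i j = Q i j * Real.exp (-(μ j) * X i j - (ν i) * Y i j))
    (hP : Feasible Q X Y p q P) :
    entObj Q P = dualFun Q X Y p q μ ν :=
  strong_duality_general Q X Y p q μ ν P hPdef hP
end

section
/- Uniqueness of the minimizer: if P₁ and P₂ are both feasible and both minimize J over the feasible set (i.e., J(P₁) ≤ J(P′) and J(P₂) ≤ J(P′) for every feasible P′), then P₁ = P₂. -/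
open Real Finset

private lemma mid_strict {a b : ℝ} (ha : 0 ≤ a) (hb : 0 ≤ b) (hab : a ≠ b) :
    ((a+b)/2) * Real.log ((a+b)/2) < (a * Real.log a + b * Real.log b)/2 := by
  have h := Real.strictConvexOn_mul_log.2 (Set.mem_Ici.2 ha) (Set.mem_Ici.2 hb) hab
    (by norm_num : (0:ℝ) < 1/2) (by norm_num : (0:ℝ) < 1/2) (by norm_num)
  simp only [smul_eq_mul] at h
  calc ((a+b)/2) * Real.log ((a+b)/2) = (1/2*a + 1/2*b) * Real.log (1/2*a + 1/2*b) := by ring_nf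
    _ < 1/2 * (a * Real.log a) + 1/2 * (b * Real.log b) := h
    _ = (a * Real.log a + b * Real.log b)/2 := by ring

private lemma g_eq {x c : ℝ} (hx : 0 ≤ x) (hc : 0 < c) :
    x * (Real.log (x/c) - 1) = x * Real.log x - x * (Real.log c + 1) := by
  rcases eq_or_lt_of_le hx with rfl | hx'
  · simp
  · rw [Real.log_div hx'.ne' hc.ne']; ring

private lemma term_lt {a b c : ℝ} (ha : 0 ≤ a) (hb : 0 ≤ b) (hc : 0 ≤ c)
    (hc0 : c = 0 → a = 0 ∧ b = 0) (hab : a ≠ b) :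
    ((a+b)/2) * (Real.log (((a+b)/2)/c) - 1)
      < (a * (Real.log (a/c) - 1) + b * (Real.log (b/c) - 1)) / 2 := by
  rcases eq_or_lt_of_le hc with rfl | hcpos
  · obtain ⟨rfl, rfl⟩ := hc0 rfl; exact absurd rfl hab
  · have hm : 0 ≤ (a+b)/2 := by linarith
    rw [g_eq ha hcpos, g_eq hb hcpos, g_eq hm hcpos]
    have := mid_strict ha hb hab
    nlinarith [this]

private lemma term_le {a b c : ℝ} (ha : 0 ≤ a) (hb : 0 ≤ b) (hc : 0 ≤ c)
    (hc0 : c = 0 → a = 0 ∧ b = 0) :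
    ((a+b)/2) * (Real.log (((a+b)/2)/c) - 1)
      ≤ (a * (Real.log (a/c) - 1) + b * (Real.log (b/c) - 1)) / 2 := by
  rcases eq_or_ne a b with rfl | hab
  · simp [add_self_div_two]
  · exact (term_lt ha hb hc hc0 hab).le

private lemma entObj_eq {n : ℕ} (Q P : Matrix (Fin n) (Fin n) ℝ) :
    entObj Q P = ∑ i, ∑ j, P i j * (Real.log (P i j / Q i j) - 1) := by
  unfold entObj
  refine Finset.sum_congr rfl fun i _ => Finset.sum_congr rfl fun j _ => ?_
  split_ifs with h
  · simp [h]
  · rfl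

/-- Uniqueness of the minimizer: if `P₁` and `P₂` are both feasible
and both minimize `J` over the feasible set, then `P₁ = P₂`. -/
theorem minimizer_unique {n : ℕ} (hn : 1 ≤ n) (Q X Y : Matrix (Fin n) (Fin n) ℝ)
    (hQ : ∀ i j, 0 ≤ Q i j)
    (hX : ∀ i j, X i j = -1 ∨ X i j = 0 ∨ X i j = 1)
    (hY : ∀ i j, Y i j = -1 ∨ Y i j = 0 ∨ Y i j = 1)
    (p q : Fin n → ℝ) (P₁ P₂ : Matrix (Fin n) (Fin n) ℝ)
    (hP₁ : Feasible Q X Y p q P₁) (hP₂ : Feasible Q X Y p q P₂)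
    (hmin₁ : ∀ P' : Matrix (Fin n) (Fin n) ℝ, Feasible Q X Y p q P' →
      entObj Q P₁ ≤ entObj Q P')
    (hmin₂ : ∀ P' : Matrix (Fin n) (Fin n) ℝ, Feasible Q X Y p q P' →
      entObj Q P₂ ≤ entObj Q P') :
    P₁ = P₂ := by
  by_contra hne
  obtain ⟨i0, hi0⟩ := Function.ne_iff.1 hne
  obtain ⟨j0, hj0⟩ := Function.ne_iff.1 hi0
  set M : Matrix (Fin n) (Fin n) ℝ := fun i j => (P₁ i j + P₂ i j)/2 with hM
  have hMfeas : Feasible Q X Y p q M := by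
    refine ⟨fun i j => by have := hP₁.1 i j; have := hP₂.1 i j; simp only [hM]; positivity,
      fun i j h => by simp only [hM, hP₁.2.1 i j h, hP₂.2.1 i j h]; norm_num,
      fun j => ?_, fun i => ?_⟩
    · have : ∑ i, X i j * M i j = ((∑ i, X i j * P₁ i j) + ∑ i, X i j * P₂ i j)/2 := by
        rw [← Finset.sum_add_distrib, Finset.sum_div]
        exact Finset.sum_congr rfl fun i _ => by simp only [hM]; ring
      rw [this, hP₁.2.2.1 j, hP₂.2.2.1 j]; ring
    · have : ∑ j, Y i j * M i j = ((∑ j, Y i j * P₁ i j) + ∑ j, Y i j * P₂ i j)/2 := by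
        rw [← Finset.sum_add_distrib, Finset.sum_div]
        exact Finset.sum_congr rfl fun j _ => by simp only [hM]; ring
      rw [this, hP₁.2.2.2 i, hP₂.2.2.2 i]; ring
  have heq : entObj Q P₁ = entObj Q P₂ := le_antisymm (hmin₁ P₂ hP₂) (hmin₂ P₁ hP₁)
  have key : entObj Q M < (entObj Q P₁ + entObj Q P₂)/2 := by
    rw [entObj_eq, entObj_eq, entObj_eq]
    rw [← Finset.sum_product', ← Finset.sum_product', ← Finset.sum_product']
    rw [← Finset.sum_add_distrib, Finset.sum_div]
    refine Finset.sum_lt_sum (fun x _ => ?_) ⟨(i0, j0), Finset.mem_univ _, ?_⟩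
    · exact term_le (hP₁.1 _ _) (hP₂.1 _ _) (hQ _ _)
        (fun h => ⟨hP₁.2.1 _ _ h, hP₂.2.1 _ _ h⟩)
    · exact term_lt (hP₁.1 _ _) (hP₂.1 _ _) (hQ _ _)
        (fun h => ⟨hP₁.2.1 _ _ h, hP₂.2.1 _ _ h⟩) hj0
  rw [← heq] at key
  have hle : entObj Q P₁ ≤ entObj Q M := hmin₁ M hMfeas
  linarith [key]
end

section
/- Lagrange multiplier characterization (Proposition 1, necessity): suppose P* is feasible, P*_{ij} > 0 for every (i,j) with Q_{ij} > 0, and P* minimizes J over the feasible set. Then there exist vectors μ, ν ∈ ℝⁿ such that P*_{ij} = Q_{ij}·exp(−μ_j X_{ij} − ν_i Y_{ij}) for every (i,j) with Q_{ij} > 0. -/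
/-!
Since `P* > 0` on the support of `Q`, the line `P* + t D` stays feasible for small `|t|` whenever
`D` vanishes off the support and has zero weighted column and row sums. Minimality then kills the
derivative of `J` along `D`, which is `∑ log (P*/Q) D`. So the linear form `log (P*/Q)` vanishes on
the common kernel of the constraint forms (weighted column sums, weighted row sums, entries off the
support), and by finite-dimensional duality it is a linear combination of them. At an entry in the
support only the column and row forms contribute, and their coefficients are `-μ` and `-ν`.
-/

open Real Filter Topology Finset

lemma hasDerivAt_mul_log_div_sub_one {a q : ℝ} (ha : a ≠ 0) (hq : q ≠ 0) :
    HasDerivAt (fun x => x * (log (x / q) - 1)) (log (a / q)) a :=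
  ((hasDerivAt_id' a).fun_mul (((hasDerivAt_id' a).div_const q).log (div_ne_zero ha hq)
    |>.sub_const 1)).congr_deriv (by field_simp; ring)

variable {n : ℕ}

lemma entObj_eq_sum (Q P : Matrix (Fin n) (Fin n) ℝ) :
    entObj Q P = ∑ i, ∑ j, P i j * (log (P i j / Q i j) - 1) := by
  refine sum_congr rfl fun i _ => sum_congr rfl fun j _ => ?_
  split_ifs with h <;> simp [h]

lemma hasDerivAt_entObj_add_smul (Q P D : Matrix (Fin n) (Fin n) ℝ)
    (hD : ∀ i j, D i j ≠ 0 → P i j ≠ 0 ∧ Q i j ≠ 0) :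
    HasDerivAt (fun t : ℝ => entObj Q (P + t • D))
      (∑ i, ∑ j, log (P i j / Q i j) * D i j) 0 := by
  simp only [entObj_eq_sum, Matrix.add_apply, Matrix.smul_apply, smul_eq_mul]
  refine HasDerivAt.fun_sum fun i _ => HasDerivAt.fun_sum fun j _ => ?_
  by_cases hDij : D i j = 0
  · simpa [hDij] using hasDerivAt_const (0 : ℝ) (P i j * (log (P i j / Q i j) - 1))
  obtain ⟨hP, hQ⟩ := hD i j hDij
  have hline : HasDerivAt (fun t : ℝ => P i j + t * D i j) (D i j) 0 := by
    simpa using ((hasDerivAt_id' (0 : ℝ)).mul_const (D i j)).const_add (P i j)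
  exact (hasDerivAt_mul_log_div_sub_one hP hQ).comp_of_eq 0 hline (by simp)

def IsFeasibleDirection (Q X Y D : Matrix (Fin n) (Fin n) ℝ) : Prop :=
  (∀ i j, Q i j = 0 → D i j = 0) ∧ (∀ j, ∑ i, X i j * D i j = 0) ∧ (∀ i, ∑ j, Y i j * D i j = 0)

section FirstOrder

variable {Q X Y P D : Matrix (Fin n) (Fin n) ℝ} {p q : Fin n → ℝ}

lemma Feasible.add_smul (hP : Feasible Q X Y p q P) (hD : IsFeasibleDirection Q X Y D) {t : ℝ}
    (ht : ∀ i j, 0 ≤ P i j + t * D i j) : Feasible Q X Y p q (P + t • D) := by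
  obtain ⟨-, hP0, hPX, hPY⟩ := hP
  obtain ⟨hD0, hDX, hDY⟩ := hD
  refine ⟨ht, fun i j h => by simp [hP0 i j h, hD0 i j h], fun j => ?_, fun i => ?_⟩
  · simp [mul_add, sum_add_distrib, hPX, mul_left_comm _ t, ← mul_sum, hDX]
  · simp [mul_add, sum_add_distrib, hPY, mul_left_comm _ t, ← mul_sum, hDY]

lemma Feasible.eventually_add_smul (hP : Feasible Q X Y p q P)
    (hP₀ : ∀ i j, Q i j ≠ 0 → 0 < P i j) (hD : IsFeasibleDirection Q X Y D) :
    ∀ᶠ t in 𝓝 (0 : ℝ), Feasible Q X Y p q (P + t • D) := by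
  have hnonneg : ∀ i j, ∀ᶠ t in 𝓝 (0 : ℝ), 0 ≤ P i j + t * D i j := fun i j => by
    by_cases hQ : Q i j = 0
    · simp [hP.2.1 i j hQ, hD.1 i j hQ]
    have hcont : Continuous fun t : ℝ => P i j + t * D i j := by fun_prop
    filter_upwards [continuousAt_const.eventually_lt hcont.continuousAt (by simpa using hP₀ i j hQ)]
      with t ht using ht.le
  filter_upwards [eventually_all.2 fun i => eventually_all.2 (hnonneg i)] with t ht
  exact hP.add_smul hD ht

lemma IsFeasibleDirection.sum_log_div_mul_eq_zero (hD : IsFeasibleDirection Q X Y D)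
    (hP : Feasible Q X Y p q P) (hP₀ : ∀ i j, Q i j ≠ 0 → 0 < P i j)
    (hmin : ∀ P', Feasible Q X Y p q P' → entObj Q P ≤ entObj Q P') :
    ∑ i, ∑ j, log (P i j / Q i j) * D i j = 0 := by
  have hlocal : IsLocalMin (fun t : ℝ => entObj Q (P + t • D)) 0 := by
    filter_upwards [hP.eventually_add_smul hP₀ hD] with t ht
    simpa using hmin _ ht
  refine hlocal.hasDerivAt_eq_zero (hasDerivAt_entObj_add_smul Q P D fun i j hDij => ?_)
  have hQ : Q i j ≠ 0 := fun h => hDij (hD.1 i j h)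
  exact ⟨(hP₀ i j hQ).ne', hQ⟩

end FirstOrder

noncomputable def constraintForm (Q X Y : Matrix (Fin n) (Fin n) ℝ) :
    {ij : Fin n × Fin n // Q ij.1 ij.2 = 0} ⊕ Fin n ⊕ Fin n → Matrix (Fin n) (Fin n) ℝ →ₗ[ℝ] ℝ
  | .inl ij => Matrix.entryLinearMap ℝ ℝ ij.1.1 ij.1.2
  | .inr (.inl j) => ∑ i, X i j • Matrix.entryLinearMap ℝ ℝ i j
  | .inr (.inr i) => ∑ j, Y i j • Matrix.entryLinearMap ℝ ℝ i j

lemma mem_iInf_ker_constraintForm {Q X Y D : Matrix (Fin n) (Fin n) ℝ} :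
    D ∈ ⨅ k, LinearMap.ker (constraintForm Q X Y k) ↔ IsFeasibleDirection Q X Y D := by
  simp [Submodule.mem_iInf, IsFeasibleDirection, constraintForm]

lemma exists_multipliers_of_isFeasibleDirection {Q X Y c : Matrix (Fin n) (Fin n) ℝ}
    (hc : ∀ D, IsFeasibleDirection Q X Y D → ∑ i, ∑ j, c i j * D i j = 0) :
    ∃ μ ν : Fin n → ℝ, ∀ i j, Q i j ≠ 0 → c i j = -μ j * X i j - ν i * Y i j := by
  let K : Matrix (Fin n) (Fin n) ℝ →ₗ[ℝ] ℝ := ∑ i, ∑ j, c i j • Matrix.entryLinearMap ℝ ℝ i j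
  have hK : ⨅ k, LinearMap.ker (constraintForm Q X Y k) ≤ LinearMap.ker K := fun D hD => by
    simpa [K] using hc D (mem_iInf_ker_constraintForm.1 hD)
  obtain ⟨w, hw⟩ := (Submodule.mem_span_range_iff_exists_fun ℝ).1 (mem_span_of_iInf_ker_le_ker hK)
  refine ⟨fun j => -w (.inr (.inl j)), fun i => -w (.inr (.inr i)), fun i j hQ => ?_⟩
  have hoff : ∀ k : {ij : Fin n × Fin n // Q ij.1 ij.2 = 0},
      Matrix.single i j (1 : ℝ) k.1.1 k.1.2 = 0 :=
    fun ⟨(i', j'), hk⟩ => Matrix.single_apply_of_ne _ _ _ _ _ (by rintro ⟨rfl, rfl⟩; exact hQ hk)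
  have hsingle := LinearMap.congr_fun hw (Matrix.single i j 1)
  simp only [K, constraintForm, Fintype.sum_sum_type, LinearMap.add_apply, LinearMap.coe_sum,
    LinearMap.coe_smul, Finset.sum_apply, Pi.smul_apply, Matrix.entryLinearMap_apply, hoff,
    smul_eq_mul, mul_zero, sum_const_zero, Matrix.single_apply, ite_and, mul_ite, mul_one,
    sum_ite_eq, mem_univ, ↓reduceIte, sum_ite_irrel, zero_add] at hsingle
  rw [← hsingle]
  ring

theorem lagrange_necessity_general {n : ℕ} (Q X Y : Matrix (Fin n) (Fin n) ℝ)
    (hQ : ∀ i j, 0 ≤ Q i j)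
    (p q : Fin n → ℝ) (Pstar : Matrix (Fin n) (Fin n) ℝ)
    (hfeas : Feasible Q X Y p q Pstar)
    (hpos : ∀ i j, 0 < Q i j → 0 < Pstar i j)
    (hmin : ∀ P' : Matrix (Fin n) (Fin n) ℝ, Feasible Q X Y p q P' →
      entObj Q Pstar ≤ entObj Q P') :
    ∃ μ ν : Fin n → ℝ, ∀ i j, 0 < Q i j →
      Pstar i j = Q i j * Real.exp (-(μ j) * X i j - (ν i) * Y i j) := by
  have hP₀ : ∀ i j, Q i j ≠ 0 → 0 < Pstar i j := fun i j h => hpos i j ((hQ i j).lt_of_ne' h)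
  obtain ⟨μ, ν, hμν⟩ := exists_multipliers_of_isFeasibleDirection
    (c := fun i j => log (Pstar i j / Q i j))
    fun D hD => hD.sum_log_div_mul_eq_zero hfeas hP₀ hmin
  refine ⟨μ, ν, fun i j hij => ?_⟩
  rw [← hμν i j hij.ne', exp_log (div_pos (hpos i j hij) hij), mul_div_cancel₀ _ hij.ne']

/-- Lagrange multiplier characterization (necessity): if `P*` is
feasible, strictly positive on the support of `Q`, and minimizes `J` over the
feasible set, then there exist `μ, ν ∈ ℝⁿ` with
`P*_{ij} = Q_{ij}·exp(−μ_j X_{ij} − ν_i Y_{ij})` whenever `Q_{ij} > 0`. -/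
theorem lagrange_necessity {n : ℕ} (hn : 1 ≤ n) (Q X Y : Matrix (Fin n) (Fin n) ℝ)
    (hQ : ∀ i j, 0 ≤ Q i j)
    (hX : ∀ i j, X i j = -1 ∨ X i j = 0 ∨ X i j = 1)
    (hY : ∀ i j, Y i j = -1 ∨ Y i j = 0 ∨ Y i j = 1)
    (p q : Fin n → ℝ) (Pstar : Matrix (Fin n) (Fin n) ℝ)
    (hfeas : Feasible Q X Y p q Pstar)
    (hpos : ∀ i j, 0 < Q i j → 0 < Pstar i j)
    (hmin : ∀ P' : Matrix (Fin n) (Fin n) ℝ, Feasible Q X Y p q P' →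
      entObj Q Pstar ≤ entObj Q P') :
    ∃ μ ν : Fin n → ℝ, ∀ i j, 0 < Q i j →
      Pstar i j = Q i j * Real.exp (-(μ j) * X i j - (ν i) * Y i j) :=
  lagrange_necessity_general Q X Y hQ p q Pstar hfeas hpos hmin
end

section
/- Well-definedness of the generalized Sinkhorn update: fix ν ∈ ℝⁿ and an index j, and set a_j = ∑_{i : X_{ij} = 1} Q_{ij} exp(−ν_i Y_{ij}) and b_j = ∑_{i : X_{ij} = −1} Q_{ij} exp(−ν_i Y_{ij}). If a_j > 0 and b_j > 0, then for every real p_j there exists a unique s ∈ ℝ with ∑_{i=1}^n X_{ij} Q_{ij} exp(−s·X_{ij} − ν_i Y_{ij}) = p_j, and it satisfies exp(−s) = (p_j + √(p_j² + 4 a_j b_j))/(2 a_j). -/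
/-- Well-definedness of the generalized Sinkhorn update: with
`a_j = ∑_{i : X_{ij} = 1} Q_{ij} exp(−ν_i Y_{ij})` and
`b_j = ∑_{i : X_{ij} = −1} Q_{ij} exp(−ν_i Y_{ij})`, if `a_j > 0` and `b_j > 0`
then for every real `p_j` there exists a unique `s` with
`∑_i X_{ij} Q_{ij} exp(−s·X_{ij} − ν_i Y_{ij}) = p_j`, and it satisfies
`exp(−s) = (p_j + √(p_j² + 4 a_j b_j))/(2 a_j)`. -/
theorem sinkhorn_update_wellDefined {n : ℕ} (hn : 1 ≤ n)
    (Q X Y : Matrix (Fin n) (Fin n) ℝ)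
    (hQ : ∀ i j, 0 ≤ Q i j)
    (hX : ∀ i j, X i j = -1 ∨ X i j = 0 ∨ X i j = 1)
    (hY : ∀ i j, Y i j = -1 ∨ Y i j = 0 ∨ Y i j = 1)
    (ν : Fin n → ℝ) (j : Fin n)
    (ha : 0 < ∑ i, if X i j = 1 then Q i j * Real.exp (-(ν i) * Y i j) else 0)
    (hb : 0 < ∑ i, if X i j = -1 then Q i j * Real.exp (-(ν i) * Y i j) else 0) :
    ∀ pj : ℝ,
      (∃! s : ℝ, ∑ i, X i j * Q i j * Real.exp (-s * X i j - (ν i) * Y i j) = pj) ∧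
      (∀ s : ℝ, (∑ i, X i j * Q i j * Real.exp (-s * X i j - (ν i) * Y i j)) = pj →
        Real.exp (-s) =
          (pj + Real.sqrt (pj ^ 2 +
            4 * (∑ i, if X i j = 1 then Q i j * Real.exp (-(ν i) * Y i j) else 0) *
              (∑ i, if X i j = -1 then Q i j * Real.exp (-(ν i) * Y i j) else 0))) /
          (2 * (∑ i, if X i j = 1 then Q i j * Real.exp (-(ν i) * Y i j) else 0))) := by
  intro pj
  set a := ∑ i, if X i j = 1 then Q i j * Real.exp (-(ν i) * Y i j) else 0 with ha_def
  set b := ∑ i, if X i j = -1 then Q i j * Real.exp (-(ν i) * Y i j) else 0 with hb_def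
  -- rewrite the sum in closed form
  have key : ∀ s : ℝ,
      (∑ i, X i j * Q i j * Real.exp (-s * X i j - (ν i) * Y i j))
        = a * Real.exp (-s) - b * Real.exp s := by
    intro s
    rw [ha_def, hb_def, Finset.sum_mul, Finset.sum_mul, ← Finset.sum_sub_distrib]
    apply Finset.sum_congr rfl
    intro i _
    rcases hX i j with h | h | h <;>
      simp [h, sub_eq_add_neg, Real.exp_add,
        show ¬((-1:ℝ) = 1) by norm_num, show ¬((1:ℝ) = -1) by norm_num] <;> ring
  set D := Real.sqrt (pj ^ 2 + 4 * a * b) with hD_def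
  have hDnn : 0 ≤ D := Real.sqrt_nonneg _
  have hD2 : D ^ 2 = pj ^ 2 + 4 * a * b := by
    rw [hD_def, Real.sq_sqrt]; nlinarith
  have hDgt : pj < D := by nlinarith
  set t₀ := (pj + D) / (2 * a) with ht₀_def
  have ht₀pos : 0 < t₀ := by
    apply div_pos <;> nlinarith
  have hquad₀ : a * t₀ ^ 2 - pj * t₀ - b = 0 := by
    rw [ht₀_def]; field_simp; nlinarith
  -- any solution has exp(-s) = t₀
  have huniq : ∀ s : ℝ, a * Real.exp (-s) - b * Real.exp s = pj → Real.exp (-s) = t₀ := by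
    intro s hs
    set t := Real.exp (-s) with ht_def
    have htpos : 0 < t := Real.exp_pos _
    have hes : Real.exp s = 1 / t := by
      rw [ht_def, Real.exp_neg, one_div, inv_inv]
    rw [hes] at hs
    have hquad : a * t ^ 2 - pj * t - b = 0 := by
      field_simp at hs; nlinarith
    have hfac : (t - t₀) * (a * (t + t₀) - pj) = 0 := by
      linear_combination hquad - hquad₀
    rcases mul_eq_zero.mp hfac with h | h
    · linarith
    · exfalso
      have hat₀ : a * t₀ = (pj + D) / 2 := by
        rw [ht₀_def]; field_simp
      nlinarith
  have hsol : a * Real.exp (-(-Real.log t₀)) - b * Real.exp (-Real.log t₀) = pj := by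
    rw [neg_neg, Real.exp_log ht₀pos, Real.exp_neg, Real.exp_log ht₀pos]
    have : a * t₀ - b * t₀⁻¹ = pj := by
      field_simp
      nlinarith
    linarith [this]
  constructor
  · refine ⟨-Real.log t₀, (key _).trans hsol, ?_⟩
    intro s hs
    rw [key] at hs
    have h1 := huniq s hs
    have h2 := huniq _ hsol
    have : -s = -(-Real.log t₀) := Real.exp_injective (by rw [h1, h2])
    linarith
  · intro s hs
    rw [key] at hs
    exact huniq s hs
end

section
/- Classical Schrödinger bridge optimality: let Q ∈ ℝ^{n×n} with Q_{ij} ≥ 0, let p, q ∈ ℝⁿ, and let μ, ν ∈ ℝⁿ. Define P by P_{ij} = Q_{ij}·exp(−ν_i − μ_j). If ∑_{i=1}^n P_{ij} = p_j for all j and ∑_{j=1}^n P_{ij} = q_i for all i, then for every matrix P′ with P′_{ij} ≥ 0, P′_{ij} = 0 whenever Q_{ij} = 0, ∑_{i=1}^n P′_{ij} = p_j for all j and ∑_{j=1}^n P′_{ij} = q_i for all i, one has KL(P|Q) ≤ KL(P′|Q), with equality only if P′ = P. -/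
/-- The relative entropy `KL(P|Q) = ∑_{i,j} P_{ij} log(P_{ij}/Q_{ij})`, with the
convention that a term with `P_{ij} = 0` contributes `0`. -/
noncomputable def klDiv {n : ℕ} (P Q : Matrix (Fin n) (Fin n) ℝ) : ℝ :=
  ∑ i, ∑ j, if P i j = 0 then (0 : ℝ) else P i j * Real.log (P i j / Q i j)

private lemma kl_key (a b : ℝ) (ha : 0 ≤ a) (hb : 0 < b) :
    a - b ≤ (if a = 0 then (0:ℝ) else a * Real.log (a / b)) ∧
    ((if a = 0 then (0:ℝ) else a * Real.log (a / b)) = a - b → a = b) := by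
  by_cases h0 : a = 0
  · subst h0
    rw [if_pos rfl]
    constructor
    · linarith
    · intro h; linarith
  · have ha' : 0 < a := lt_of_le_of_ne ha (Ne.symm h0)
    rw [if_neg h0]
    have hba : 0 < b / a := div_pos hb ha'
    have hrw : Real.log (a / b) = -(Real.log (b / a)) := by
      rw [Real.log_div h0 hb.ne', Real.log_div hb.ne' h0]; ring
    have hab : a * (b / a) = b := by field_simp
    constructor
    · have hlog : Real.log (b / a) ≤ b / a - 1 := Real.log_le_sub_one_of_pos hba
      have := mul_le_mul_of_nonneg_left hlog ha'.le
      rw [hrw]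
      nlinarith
    · intro heq
      by_contra hne
      have hne' : b / a ≠ 1 := by
        intro h
        have hb' : b = a := by
          field_simp at h
          linarith
        exact hne hb'.symm
      have hlt : Real.log (b / a) < b / a - 1 := Real.log_lt_sub_one_of_pos hba hne'
      have := mul_lt_mul_of_pos_left hlt ha'
      rw [hrw] at heq
      nlinarith

/-- Classical Schrödinger bridge optimality: if
`P_{ij} = Q_{ij}·exp(−ν_i − μ_j)` satisfies the marginal constraints, then it
minimizes `KL(·|Q)` over all nonnegative matrices supported on `Q` with the same
marginals, with equality only at `P` itself. -/
theorem classical_SBP_optimality {n : ℕ} (hn : 1 ≤ n)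
    (Q : Matrix (Fin n) (Fin n) ℝ) (hQ : ∀ i j, 0 ≤ Q i j)
    (p q : Fin n → ℝ) (μ ν : Fin n → ℝ)
    (P : Matrix (Fin n) (Fin n) ℝ)
    (hPdef : ∀ i j, P i j = Q i j * Real.exp (-(ν i) - μ j))
    (hPcol : ∀ j, ∑ i, P i j = p j) (hProw : ∀ i, ∑ j, P i j = q i) :
    ∀ P' : Matrix (Fin n) (Fin n) ℝ,
      (∀ i j, 0 ≤ P' i j) → (∀ i j, Q i j = 0 → P' i j = 0) →
      (∀ j, ∑ i, P' i j = p j) → (∀ i, ∑ j, P' i j = q i) →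
      klDiv P Q ≤ klDiv P' Q ∧ (klDiv P Q = klDiv P' Q → P' = P) := by
  intro P' hP'nn hP'supp hP'col hP'row
  set c : Fin n → Fin n → ℝ := fun i j => -(ν i) - μ j with hc
  have hPzero : ∀ i j, Q i j = 0 → P i j = 0 := by
    intro i j h; rw [hPdef, h, zero_mul]
  have hPpos : ∀ i j, Q i j ≠ 0 → 0 < P i j := by
    intro i j h
    rw [hPdef]
    exact mul_pos (lt_of_le_of_ne (hQ i j) (Ne.symm h)) (Real.exp_pos _)
  have hlogPQ : ∀ i j, Q i j ≠ 0 → Real.log (P i j / Q i j) = c i j := by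
    intro i j h
    rw [hPdef, mul_comm, mul_div_assoc, div_self h, mul_one, Real.log_exp]
  -- klDiv P Q = ∑∑ P * c
  have hklP : klDiv P Q = ∑ i, ∑ j, P i j * c i j := by
    unfold klDiv
    refine Finset.sum_congr rfl fun i _ => Finset.sum_congr rfl fun j _ => ?_
    by_cases hP0 : P i j = 0
    · rw [if_pos hP0, hP0, zero_mul]
    · have hQ0 : Q i j ≠ 0 := fun h => hP0 (hPzero i j h)
      rw [if_neg hP0, hlogPQ i j hQ0]
  -- klDiv P' Q = ∑∑ g + ∑∑ P' * c
  have hklP' : klDiv P' Q = ∑ i, ∑ j,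
      ((if P' i j = 0 then (0:ℝ) else P' i j * Real.log (P' i j / P i j)) + P' i j * c i j) := by
    unfold klDiv
    refine Finset.sum_congr rfl fun i _ => Finset.sum_congr rfl fun j _ => ?_
    by_cases hP0 : P' i j = 0
    · rw [if_pos hP0, if_pos hP0, hP0, zero_mul, add_zero]
    · have hQ0 : Q i j ≠ 0 := fun h => hP0 (hP'supp i j h)
      have hPp : 0 < P i j := hPpos i j hQ0
      have hP'p : 0 < P' i j := lt_of_le_of_ne (hP'nn i j) (Ne.symm hP0)
      have hQp : 0 < Q i j := lt_of_le_of_ne (hQ i j) (Ne.symm hQ0)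
      rw [if_neg hP0, if_neg hP0]
      have key : Real.log (P' i j / Q i j) = Real.log (P' i j / P i j) + c i j := by
        rw [← hlogPQ i j hQ0, ← Real.log_mul (by positivity) (by positivity)]
        congr 1
        field_simp
      rw [key]; ring
  -- linear parts agree
  have expand : ∀ R : Matrix (Fin n) (Fin n) ℝ, ∑ i, ∑ j, R i j * c i j =
      -(∑ i, ν i * (∑ j, R i j)) - ∑ j, μ j * (∑ i, R i j) := by
    intro R
    have h1 : ∀ i j, R i j * c i j = -(ν i * R i j) - μ j * R i j := by
      intro i j; simp only [hc]; ring
    simp_rw [h1, Finset.sum_sub_distrib, Finset.sum_neg_distrib, ← Finset.mul_sum]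
    congr 1
    rw [Finset.sum_comm]
    simp_rw [← Finset.mul_sum]
  have hlin : ∑ i, ∑ j, P' i j * c i j = ∑ i, ∑ j, P i j * c i j := by
    rw [expand P', expand P]
    simp_rw [hP'row, hProw, hP'col, hPcol]
  -- mass identity
  have hsum0 : ∑ i, ∑ j, (P' i j - P i j) = 0 := by
    simp_rw [Finset.sum_sub_distrib, hP'row, hProw]
    simp
  -- the difference of KL divergences
  have hdiff : klDiv P' Q - klDiv P Q = ∑ i, ∑ j,
      ((if P' i j = 0 then (0:ℝ) else P' i j * Real.log (P' i j / P i j)) - (P' i j - P i j)) := by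
    have e1 : ∑ i, ∑ j, ((if P' i j = 0 then (0:ℝ) else P' i j * Real.log (P' i j / P i j))
        - (P' i j - P i j)) =
        (∑ i, ∑ j, (if P' i j = 0 then (0:ℝ) else P' i j * Real.log (P' i j / P i j)))
        - ∑ i, ∑ j, (P' i j - P i j) := by
      simp_rw [Finset.sum_sub_distrib]
    rw [e1, hsum0, sub_zero, hklP', hklP, ← hlin]
    simp_rw [Finset.sum_add_distrib]
    ring
  have hterm : ∀ i j, 0 ≤
      (if P' i j = 0 then (0:ℝ) else P' i j * Real.log (P' i j / P i j)) - (P' i j - P i j) := by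
    intro i j
    by_cases hQ0 : Q i j = 0
    · rw [hP'supp i j hQ0, hPzero i j hQ0]
      simp
    · have := (kl_key (P' i j) (P i j) (hP'nn i j) (hPpos i j hQ0)).1
      linarith
  constructor
  · have : 0 ≤ klDiv P' Q - klDiv P Q := by
      rw [hdiff]
      exact Finset.sum_nonneg fun i _ => Finset.sum_nonneg fun j _ => hterm i j
    linarith
  · intro heq
    have hzero : ∑ i, ∑ j,
        ((if P' i j = 0 then (0:ℝ) else P' i j * Real.log (P' i j / P i j)) - (P' i j - P i j))
        = 0 := by rw [← hdiff, heq, sub_self]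
    have hrows : ∀ i ∈ Finset.univ, (∑ j,
        ((if P' i j = 0 then (0:ℝ) else P' i j * Real.log (P' i j / P i j)) - (P' i j - P i j)))
        = 0 := by
      rw [← Finset.sum_eq_zero_iff_of_nonneg
        (fun i _ => Finset.sum_nonneg fun j _ => hterm i j)]
      exact hzero
    have hentries : ∀ i j,
        ((if P' i j = 0 then (0:ℝ) else P' i j * Real.log (P' i j / P i j)) - (P' i j - P i j))
        = 0 := by
      intro i j
      have := (Finset.sum_eq_zero_iff_of_nonneg (fun j _ => hterm i j)).mp
        (hrows i (Finset.mem_univ i)) j (Finset.mem_univ j)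
      exact this
    ext i j
    by_cases hQ0 : Q i j = 0
    · rw [hP'supp i j hQ0, hPzero i j hQ0]
    · have h := hentries i j
      have := (kl_key (P' i j) (P i j) (hP'nn i j) (hPpos i j hQ0)).2
      exact this (by linarith)
end

section
/- Multi-marginal weak duality with directional sign templates: for every feasible tensor P and every family of vectors μ^{(1)}, …, μ^{(k)} ∈ ℝⁿ, J(P) ≥ −∑_I Q_I exp(−∑_{ℓ=1}^k μ^{(ℓ)}_{i_ℓ} X^{(ℓ)}_I) − ∑_{ℓ=1}^k ∑_{i=1}^n μ^{(ℓ)}_i p^{(ℓ)}_i. -/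
/-- The multi-marginal entropic objective `J(P) = ∑_I P_I (log(P_I/Q_I) − 1)`,
where the sum ranges over multi-indices `I ∈ {1,…,n}^k` and a term with
`P_I = 0` contributes `0`. -/
noncomputable def entObjT {n k : ℕ} (Q P : (Fin k → Fin n) → ℝ) : ℝ :=
  ∑ I : Fin k → Fin n, if P I = 0 then (0 : ℝ) else P I * (Real.log (P I / Q I) - 1)

/-- Feasibility of a posterior tensor `P` with respect to the prior `Q`, the
directional sign tensors `X ℓ`, and the marginals `p ℓ`. -/
def FeasibleT {n k : ℕ} (Q : (Fin k → Fin n) → ℝ)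
    (X : Fin k → (Fin k → Fin n) → ℝ) (p : Fin k → Fin n → ℝ)
    (P : (Fin k → Fin n) → ℝ) : Prop :=
  (∀ I, 0 ≤ P I) ∧ (∀ I, Q I = 0 → P I = 0) ∧
  (∀ ℓ : Fin k, ∀ i : Fin n,
    ∑ I ∈ Finset.univ.filter (fun I : Fin k → Fin n => I ℓ = i), X ℓ I * P I = p ℓ i)

lemma young_ent (x q t : ℝ) (hx : 0 ≤ x) (hq : 0 ≤ q) (hqx : q = 0 → x = 0) :
    (if x = 0 then (0:ℝ) else x * (Real.log (x / q) - 1)) ≥ x * t - q * Real.exp t := by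
  by_cases hx0 : x = 0
  · simp [hx0]
    positivity
  · have hxpos : 0 < x := lt_of_le_of_ne hx (Ne.symm hx0)
    have hqpos : 0 < q := by
      rcases lt_or_eq_of_le hq with h | h
      · exact h
      · exact absurd (hqx h.symm) hx0
    rw [if_neg hx0]
    have key : q * Real.exp t ≥ x * (t - Real.log (x / q) + 1) := by
      have : Real.exp (t - Real.log (x / q)) ≥ t - Real.log (x / q) + 1 := by
        have := Real.add_one_le_exp (t - Real.log (x / q)); linarith
      have hxq : Real.exp (Real.log (x / q)) = x / q :=
        Real.exp_log (by positivity)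
      have h2 : x * Real.exp (t - Real.log (x / q)) ≥ x * (t - Real.log (x / q) + 1) :=
        mul_le_mul_of_nonneg_left this hx
      have h3 : x * Real.exp (t - Real.log (x / q)) = q * Real.exp t := by
        rw [Real.exp_sub, hxq]
        field_simp
      linarith
    nlinarith [key]

/-- Multi-marginal weak duality with directional sign templates:
for every feasible tensor `P` and every family `μ^{(1)},…,μ^{(k)} ∈ ℝⁿ`,
`J(P) ≥ −∑_I Q_I exp(−∑_ℓ μ^{(ℓ)}_{i_ℓ} X^{(ℓ)}_I) − ∑_ℓ ∑_i μ^{(ℓ)}_i p^{(ℓ)}_i`. -/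
theorem multi_marginal_weak_duality {n k : ℕ} (hn : 1 ≤ n) (hk : 1 ≤ k)
    (Q : (Fin k → Fin n) → ℝ) (hQ : ∀ I, 0 ≤ Q I)
    (X : Fin k → (Fin k → Fin n) → ℝ)
    (hX : ∀ ℓ I, X ℓ I = -1 ∨ X ℓ I = 0 ∨ X ℓ I = 1)
    (p : Fin k → Fin n → ℝ)
    (P : (Fin k → Fin n) → ℝ) (hP : FeasibleT Q X p P)
    (μ : Fin k → Fin n → ℝ) :
    entObjT Q P ≥
      -(∑ I : Fin k → Fin n, Q I * Real.exp (-∑ ℓ, μ ℓ (I ℓ) * X ℓ I))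
        - ∑ ℓ, ∑ i, μ ℓ i * p ℓ i := by

  obtain ⟨hPpos, hPQ, hmarg⟩ := hP
  have pointwise : ∀ I : Fin k → Fin n,
      (if P I = 0 then (0:ℝ) else P I * (Real.log (P I / Q I) - 1)) ≥
        P I * (-∑ ℓ, μ ℓ (I ℓ) * X ℓ I) - Q I * Real.exp (-∑ ℓ, μ ℓ (I ℓ) * X ℓ I) := by
    intro I
    exact young_ent (P I) (Q I) _ (hPpos I) (hQ I) (hPQ I)
  have hsum : entObjT Q P ≥
      ∑ I : Fin k → Fin n, (P I * (-∑ ℓ, μ ℓ (I ℓ) * X ℓ I)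
        - Q I * Real.exp (-∑ ℓ, μ ℓ (I ℓ) * X ℓ I)) := by
    unfold entObjT
    exact Finset.sum_le_sum fun I _ => pointwise I
  have hswap : ∑ I : Fin k → Fin n, P I * (∑ ℓ, μ ℓ (I ℓ) * X ℓ I)
      = ∑ ℓ, ∑ i, μ ℓ i * p ℓ i := by
    have e1 : ∑ I : Fin k → Fin n, P I * (∑ ℓ, μ ℓ (I ℓ) * X ℓ I)
        = ∑ ℓ, ∑ I : Fin k → Fin n, P I * (μ ℓ (I ℓ) * X ℓ I) := by
      simp_rw [Finset.mul_sum]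
      exact Finset.sum_comm
    rw [e1]
    refine Finset.sum_congr rfl fun ℓ _ => ?_
    rw [← Finset.sum_fiberwise Finset.univ (fun I : Fin k → Fin n => I ℓ)
      (fun I => P I * (μ ℓ (I ℓ) * X ℓ I))]
    refine Finset.sum_congr rfl fun i _ => ?_
    rw [← hmarg ℓ i, Finset.mul_sum]
    refine Finset.sum_congr rfl fun I hI => ?_
    simp only [Finset.mem_filter] at hI
    rw [hI.2]
    ring
  have split : ∑ I : Fin k → Fin n, (P I * (-∑ ℓ, μ ℓ (I ℓ) * X ℓ I)
        - Q I * Real.exp (-∑ ℓ, μ ℓ (I ℓ) * X ℓ I))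
      = -(∑ I : Fin k → Fin n, Q I * Real.exp (-∑ ℓ, μ ℓ (I ℓ) * X ℓ I))
        - ∑ I : Fin k → Fin n, P I * (∑ ℓ, μ ℓ (I ℓ) * X ℓ I) := by
    rw [Finset.sum_sub_distrib]
    simp [mul_neg, Finset.sum_neg_distrib]
    ring
  rw [split, hswap] at hsum
  exact hsum
end

section
/- Multi-marginal closed-form optimality: let μ^{(1)}, …, μ^{(k)} ∈ ℝⁿ and define the tensor P by P_I = Q_I·exp(−∑_{ℓ=1}^k μ^{(ℓ)}_{i_ℓ} X^{(ℓ)}_I) for every multi-index I. If P is feasible, then for every feasible tensor P′ one has J(P) ≤ J(P′); that is, P minimizes J over the feasible set. -/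
/-- Multi-marginal closed-form optimality: if the tensor
`P_I = Q_I·exp(−∑_ℓ μ^{(ℓ)}_{i_ℓ} X^{(ℓ)}_I)` is feasible, then it minimizes
`J` over the feasible set. -/
theorem multi_marginal_closed_form_optimality {n k : ℕ} (hn : 1 ≤ n) (hk : 1 ≤ k)
    (Q : (Fin k → Fin n) → ℝ) (hQ : ∀ I, 0 ≤ Q I)
    (X : Fin k → (Fin k → Fin n) → ℝ)
    (hX : ∀ ℓ I, X ℓ I = -1 ∨ X ℓ I = 0 ∨ X ℓ I = 1)
    (p : Fin k → Fin n → ℝ) (μ : Fin k → Fin n → ℝ)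
    (P : (Fin k → Fin n) → ℝ)
    (hPdef : ∀ I, P I = Q I * Real.exp (-∑ ℓ, μ ℓ (I ℓ) * X ℓ I))
    (hP : FeasibleT Q X p P) :
    ∀ P' : (Fin k → Fin n) → ℝ, FeasibleT Q X p P' → entObjT Q P ≤ entObjT Q P' := by
  intro P' hP'
  obtain ⟨hP0, hPQ, hPm⟩ := hP
  obtain ⟨hP'0, hP'Q, hP'm⟩ := hP'
  set s : (Fin k → Fin n) → ℝ := fun I => ∑ ℓ, μ ℓ (I ℓ) * X ℓ I with hs
  -- linear functional identity via marginals
  have key : ∀ T : (Fin k → Fin n) → ℝ,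
      (∀ ℓ i, ∑ I ∈ Finset.univ.filter (fun I : Fin k → Fin n => I ℓ = i), X ℓ I * T I = p ℓ i) →
      ∑ I, s I * T I = ∑ ℓ, ∑ i, μ ℓ i * p ℓ i := by
    intro T hT
    have h1 : ∑ I, s I * T I = ∑ ℓ, ∑ I : Fin k → Fin n, μ ℓ (I ℓ) * (X ℓ I * T I) := by
      rw [Finset.sum_comm]
      refine Finset.sum_congr rfl fun I _ => ?_
      simp only [hs, Finset.sum_mul, mul_assoc]
    rw [h1]
    refine Finset.sum_congr rfl fun ℓ _ => ?_
    rw [← Finset.sum_fiberwise (Finset.univ) (fun I : Fin k → Fin n => I ℓ)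
      (fun I => μ ℓ (I ℓ) * (X ℓ I * T I))]
    refine Finset.sum_congr rfl fun i _ => ?_
    rw [← hT ℓ i, Finset.mul_sum]
    refine Finset.sum_congr rfl fun I hI => ?_
    rw [Finset.mem_filter] at hI
    rw [hI.2]
  have hsum : ∑ I, s I * P I = ∑ I, s I * P' I := by
    rw [key P hPm, key P' hP'm]
  -- P I positive iff Q I positive
  have hterm : ∀ I, (if P I = 0 then (0:ℝ) else P I * (Real.log (P I / Q I) - 1))
      = (-s I - 1) * P I := by
    intro I
    rcases eq_or_lt_of_le (hQ I) with hq | hq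
    · have : P I = 0 := by rw [hPdef I, ← hq]; ring
      simp [this]
    · have hPpos : 0 < P I := by
        rw [hPdef I]; exact mul_pos hq (Real.exp_pos _)
      rw [if_neg (ne_of_gt hPpos)]
      have hlog : Real.log (P I / Q I) = -s I := by
        rw [hPdef I, mul_comm, mul_div_assoc, div_self (ne_of_gt hq), mul_one,
          Real.log_exp]
      rw [hlog]; ring
  have hEP : entObjT Q P = ∑ I, (-s I - 1) * P I := by
    unfold entObjT
    exact Finset.sum_congr rfl fun I _ => hterm I
  have hineq : ∀ I, -s I * P' I - P I ≤
      (if P' I = 0 then (0:ℝ) else P' I * (Real.log (P' I / Q I) - 1)) := by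
    intro I
    rcases eq_or_lt_of_le (hQ I) with hq | hq
    · have h1 : P I = 0 := by rw [hPdef I, ← hq]; ring
      have h2 : P' I = 0 := hP'Q I hq.symm
      simp [h1, h2]
    · have hPpos : 0 < P I := by
        rw [hPdef I]; exact mul_pos hq (Real.exp_pos _)
      rcases eq_or_lt_of_le (hP'0 I) with hy | hy
      · rw [if_pos hy.symm, ← hy]
        simp only [mul_zero, zero_sub, neg_mul]
        nlinarith
      · rw [if_neg (ne_of_gt hy)]
        -- need : -s I * P' I - P I ≤ P' I * (log (P' I / Q I) - 1)
        have hlogP : Real.log (P I / Q I) = -s I := by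
          rw [hPdef I, mul_comm, mul_div_assoc, div_self (ne_of_gt hq), mul_one,
            Real.log_exp]
        have hkey : Real.log (P I / P' I) ≤ P I / P' I - 1 :=
          Real.log_le_sub_one_of_pos (div_pos hPpos hy)
        have hsplit : Real.log (P I / P' I) = Real.log (P I / Q I) - Real.log (P' I / Q I) := by
          rw [Real.log_div (ne_of_gt hPpos) (ne_of_gt hy),
            Real.log_div (ne_of_gt hPpos) (ne_of_gt hq),
            Real.log_div (ne_of_gt hy) (ne_of_gt hq)]
          ring
        have := mul_le_mul_of_nonneg_left hkey (le_of_lt hy)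
        rw [hsplit, hlogP] at this
        have hdiv : P' I * (P I / P' I - 1) = P I - P' I := by
          field_simp
        rw [hdiv] at this
        nlinarith
  calc entObjT Q P = ∑ I, (-s I - 1) * P I := hEP
    _ = ∑ I, (-s I * P' I - P I) := by
        have e1 : ∑ I, (-s I - 1) * P I = -(∑ I, s I * P I) - ∑ I, P I := by
          rw [← Finset.sum_neg_distrib, ← Finset.sum_sub_distrib]
          exact Finset.sum_congr rfl fun I _ => by ring
        have e2 : ∑ I, (-s I * P' I - P I) = -(∑ I, s I * P' I) - ∑ I, P I := by
          rw [← Finset.sum_neg_distrib, ← Finset.sum_sub_distrib]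
          exact Finset.sum_congr rfl fun I _ => by ring
        rw [e1, e2, hsum]
    _ ≤ entObjT Q P' := Finset.sum_le_sum fun I _ => hineq I
end

section
/- Multi-marginal uniqueness: if P₁ and P₂ are both feasible tensors and both minimize J over the feasible set (i.e., J(P₁) ≤ J(P′) and J(P₂) ≤ J(P′) for every feasible P′), then P₁ = P₂. -/
/-- The per-entry term of the objective. -/
noncomputable def fTerm (q x : ℝ) : ℝ :=
  if x = 0 then (0 : ℝ) else x * (Real.log (x / q) - 1)

lemma fTerm_eq {q : ℝ} (hq : 0 < q) {x : ℝ} :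
    fTerm q x = x * Real.log x - x * (Real.log q + 1) := by
  unfold fTerm
  by_cases hx : x = 0
  · simp [hx]
  · rw [if_neg hx, Real.log_div hx (ne_of_gt hq)]
    ring

lemma fTerm_mid_le {q : ℝ} (hq : 0 < q) {a b : ℝ} (ha : 0 ≤ a) (hb : 0 ≤ b) :
    fTerm q ((a + b) / 2) ≤ (fTerm q a + fTerm q b) / 2 := by
  have h := Real.convexOn_mul_log.2 (Set.mem_Ici.mpr ha) (Set.mem_Ici.mpr hb)
    (by norm_num : (0:ℝ) ≤ 1/2) (by norm_num : (0:ℝ) ≤ 1/2) (by norm_num)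
  simp only [smul_eq_mul] at h
  rw [fTerm_eq hq, fTerm_eq hq, fTerm_eq hq]
  have : (1:ℝ)/2 * a + 1/2 * b = (a + b) / 2 := by ring
  rw [this] at h
  nlinarith [h]

lemma fTerm_mid_lt {q : ℝ} (hq : 0 < q) {a b : ℝ} (ha : 0 ≤ a) (hb : 0 ≤ b)
    (hab : a ≠ b) :
    fTerm q ((a + b) / 2) < (fTerm q a + fTerm q b) / 2 := by
  have h := Real.strictConvexOn_mul_log.2 (Set.mem_Ici.mpr ha) (Set.mem_Ici.mpr hb)
    hab (by norm_num : (0:ℝ) < 1/2) (by norm_num : (0:ℝ) < 1/2) (by norm_num)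
  simp only [smul_eq_mul] at h
  rw [fTerm_eq hq, fTerm_eq hq, fTerm_eq hq]
  have : (1:ℝ)/2 * a + 1/2 * b = (a + b) / 2 := by ring
  rw [this] at h
  nlinarith [h]

lemma entObjT_eq_sum_fTerm {n k : ℕ} (Q P : (Fin k → Fin n) → ℝ) :
    entObjT Q P = ∑ I : Fin k → Fin n, fTerm (Q I) (P I) := rfl

/-- Multi-marginal uniqueness: if `P₁` and `P₂` are both feasible
tensors and both minimize `J` over the feasible set, then `P₁ = P₂`. -/
theorem multi_marginal_minimizer_unique {n k : ℕ} (hn : 1 ≤ n) (hk : 1 ≤ k)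
    (Q : (Fin k → Fin n) → ℝ) (hQ : ∀ I, 0 ≤ Q I)
    (X : Fin k → (Fin k → Fin n) → ℝ)
    (hX : ∀ ℓ I, X ℓ I = -1 ∨ X ℓ I = 0 ∨ X ℓ I = 1)
    (p : Fin k → Fin n → ℝ)
    (P₁ P₂ : (Fin k → Fin n) → ℝ)
    (hP₁ : FeasibleT Q X p P₁) (hP₂ : FeasibleT Q X p P₂)
    (hmin₁ : ∀ P' : (Fin k → Fin n) → ℝ, FeasibleT Q X p P' →
      entObjT Q P₁ ≤ entObjT Q P')
    (hmin₂ : ∀ P' : (Fin k → Fin n) → ℝ, FeasibleT Q X p P' →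
      entObjT Q P₂ ≤ entObjT Q P') :
    P₁ = P₂ := by
  by_contra hne
  obtain ⟨hP₁n, hP₁z, hP₁m⟩ := hP₁
  obtain ⟨hP₂n, hP₂z, hP₂m⟩ := hP₂
  -- midpoint
  set M : (Fin k → Fin n) → ℝ := fun I => (P₁ I + P₂ I) / 2 with hM
  have hMfeas : FeasibleT Q X p M := by
    refine ⟨fun I => by have := hP₁n I; have := hP₂n I; simp only [hM]; positivity,
      fun I hQI => by simp [hM, hP₁z I hQI, hP₂z I hQI], fun ℓ i => ?_⟩
    have h : ∀ I, X ℓ I * M I = (X ℓ I * P₁ I + X ℓ I * P₂ I) / 2 := fun I => by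
      simp only [hM]; ring
    rw [Finset.sum_congr rfl (fun I _ => h I), ← Finset.sum_div,
      Finset.sum_add_distrib, hP₁m ℓ i, hP₂m ℓ i]
    ring
  -- equal minimal values
  have heq : entObjT Q P₁ = entObjT Q P₂ :=
    le_antisymm (hmin₁ P₂ ⟨hP₂n, hP₂z, hP₂m⟩) (hmin₂ P₁ ⟨hP₁n, hP₁z, hP₁m⟩)
  -- strict midpoint inequality
  obtain ⟨I₀, hI₀⟩ : ∃ I, P₁ I ≠ P₂ I := by
    by_contra h
    push_neg at h
    exact hne (funext h)
  have hQI₀ : 0 < Q I₀ := by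
    rcases (hQ I₀).lt_or_eq with h | h
    · exact h
    · exact absurd (by rw [hP₁z I₀ h.symm, hP₂z I₀ h.symm]) hI₀
  have hkey : entObjT Q M < (entObjT Q P₁ + entObjT Q P₂) / 2 := by
    rw [entObjT_eq_sum_fTerm, entObjT_eq_sum_fTerm, entObjT_eq_sum_fTerm,
      ← Finset.sum_add_distrib, Finset.sum_div]
    apply Finset.sum_lt_sum
    · intro I _
      rcases (hQ I).lt_or_eq with h | h
      · exact fTerm_mid_le h (hP₁n I) (hP₂n I)
      · simp [hM, hP₁z I h.symm, hP₂z I h.symm, fTerm]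
    · exact ⟨I₀, Finset.mem_univ _, fTerm_mid_lt hQI₀ (hP₁n I₀) (hP₂n I₀) hI₀⟩
  have := hmin₁ M hMfeas
  rw [heq] at this
  linarith [hkey, this]
end
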